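/- The quotient A-algebra A[e₁, e₂]/( e₁² − (t₁+t₂)e₁ − 2e₂ + 2t₁t₂ , e₂² − (t₁+t₂)²e₂ + t₁t₂(t₁+t₂)e₁ − t₁²t₂² , e₁e₂ − 2(t₁+t₂)e₂ + t₁t₂e₁ ) is isomorphic as an A-algebra to A[e₁]/((e₁ − 2t₁)(e₁ − 2t₂)(e₁ − (t₁+t₂))), via the map fixing e₁ and sending e₂ to (e₁² − (t₁+t₂)e₁ + 2t₁t₂)/2. -/

import Mathlib

/-! Since `2` is invertible, the first relation solves for `e₂ = (e₁² − (t₁+t₂)e₁ + 2t₁t₂)/2`.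
After this substitution the third relation becomes half the cubic
`(e₁ − 2t₁)(e₁ − 2t₂)(e₁ − (t₁+t₂))` and the second a multiple of it; conversely the cubic is
`(e₁ − 2(t₁+t₂))·r₁ + 2·r₃` for the first and third relations `r₁, r₃`. The computation works
over any commutative ring in which `2` is a unit, with `t₁, t₂` arbitrary. -/

set_option synthInstance.maxHeartbeats 1000000
set_option maxHeartbeats 1000000

noncomputable section

namespace Paper9

open MvPolynomial in
section

/-- The Laurent polynomial ring `A = k[t₁^{±1}, t₂^{±1}]`, realized as the group algebra
of `ℤ²` over `k`. -/
abbrev A (k : Type) [Field k] : Type := AddMonoidAlgebra k (Fin 2 →₀ ℤ)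

variable (k : Type) [Field k]

/-- The Laurent variable `tᵢ₊₁ ∈ A`. -/
def t (i : Fin 2) : A k := AddMonoidAlgebra.single (Finsupp.single i 1) 1

/-- The ideal of `A[e₁, e₂]` generated by
`e₁² − (t₁+t₂)e₁ − 2e₂ + 2t₁t₂`,
`e₂² − (t₁+t₂)²e₂ + t₁t₂(t₁+t₂)e₁ − t₁²t₂²` and
`e₁e₂ − 2(t₁+t₂)e₂ + t₁t₂e₁`, where `e₁ = X 0` and `e₂ = X 1`. -/
def rIdeal : Ideal (MvPolynomial (Fin 2) (A k)) :=
  Ideal.span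
    { (X 0) ^ 2 - C (t k 0 + t k 1) * X 0 - 2 * X 1 + C (2 * (t k 0 * t k 1)),
      (X 1) ^ 2 - C ((t k 0 + t k 1) ^ 2) * X 1 + C (t k 0 * t k 1 * (t k 0 + t k 1)) * X 0
        - C ((t k 0) ^ 2 * (t k 1) ^ 2),
      X 0 * X 1 - C (2 * (t k 0 + t k 1)) * X 1 + C (t k 0 * t k 1) * X 0 }

/-- The first presented `A`-algebra. -/
abbrev Q₁ : Type := MvPolynomial (Fin 2) (A k) ⧸ rIdeal k

/-- The class of `eᵢ₊₁` in `Q₁`. -/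
def e (i : Fin 2) : Q₁ k := Ideal.Quotient.mk (rIdeal k) (X i)

/-- The ideal `((e₁ − 2t₁)(e₁ − 2t₂)(e₁ − (t₁ + t₂)))` of `A[e₁]`. -/
def qIdeal : Ideal (Polynomial (A k)) :=
  Ideal.span {(Polynomial.X - Polynomial.C (2 * t k 0)) *
      (Polynomial.X - Polynomial.C (2 * t k 1)) *
      (Polynomial.X - Polynomial.C (t k 0 + t k 1))}

/-- The second presented `A`-algebra `A[e₁]/((e₁ − 2t₁)(e₁ − 2t₂)(e₁ − (t₁ + t₂)))`. -/
abbrev Q₂ : Type := Polynomial (A k) ⧸ qIdeal k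

/-- The class of `e₁` in `Q₂`. -/
def e₁' : Q₂ k := Ideal.Quotient.mk (qIdeal k) Polynomial.X

end

section Generic

open Polynomial

variable {R : Type*} [CommRing R] (a b : R)

/-- `rIdeal k` is definitionally `rIdealOf (t k 0) (t k 1)`, and `qIdeal k` is
`Ideal.span {cubic (t k 0) (t k 1)}`. -/
def rIdealOf : Ideal (MvPolynomial (Fin 2) R) :=
  Ideal.span
    { (MvPolynomial.X 0) ^ 2 - MvPolynomial.C (a + b) * MvPolynomial.X 0 - 2 * MvPolynomial.X 1
        + MvPolynomial.C (2 * (a * b)),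
      (MvPolynomial.X 1) ^ 2 - MvPolynomial.C ((a + b) ^ 2) * MvPolynomial.X 1
        + MvPolynomial.C (a * b * (a + b)) * MvPolynomial.X 0 - MvPolynomial.C (a ^ 2 * b ^ 2),
      MvPolynomial.X 0 * MvPolynomial.X 1 - MvPolynomial.C (2 * (a + b)) * MvPolynomial.X 1
        + MvPolynomial.C (a * b) * MvPolynomial.X 0 }

def cubic : R[X] := (X - C (2 * a)) * (X - C (2 * b)) * (X - C (a + b))

/-- The image of `2 e₂`, read off from the first relation. -/
def twiceE₂ : R[X] := X ^ 2 - C (a + b) * X + C (2 * (a * b))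

theorem aeval_X_zero_cubic_mem_rIdealOf :
    aeval (MvPolynomial.X 0) (cubic a b) ∈ rIdealOf a b := by
  set f₁ : MvPolynomial (Fin 2) R := (MvPolynomial.X 0) ^ 2
    - MvPolynomial.C (a + b) * MvPolynomial.X 0 - 2 * MvPolynomial.X 1
    + MvPolynomial.C (2 * (a * b))
  set f₃ : MvPolynomial (Fin 2) R := MvPolynomial.X 0 * MvPolynomial.X 1
    - MvPolynomial.C (2 * (a + b)) * MvPolynomial.X 1 + MvPolynomial.C (a * b) * MvPolynomial.X 0
  have hf₁ : f₁ ∈ rIdealOf a b := Ideal.subset_span (by simp [f₁])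
  have hf₃ : f₃ ∈ rIdealOf a b := Ideal.subset_span (by simp [f₃])
  have key : aeval (MvPolynomial.X 0) (cubic a b)
      = (MvPolynomial.X 0 - MvPolynomial.C (2 * (a + b))) * f₁ + 2 * f₃ := by
    simp only [cubic, f₁, f₃, map_sub, map_mul, map_add, map_ofNat, aeval_X, aeval_C,
      MvPolynomial.algebraMap_eq]
    ring
  rw [key]
  exact add_mem (Ideal.mul_mem_left _ _ hf₁) (Ideal.mul_mem_left _ _ hf₃)

def elimE₂ (u : R) : MvPolynomial (Fin 2) R →ₐ[R] R[X] :=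
  MvPolynomial.aeval ![X, C u * twiceE₂ a b]

theorem rIdealOf_le_comap_elimE₂ {u : R} (hu : 2 * u = 1) :
    rIdealOf a b ≤ (Ideal.span {cubic a b}).comap (elimE₂ a b u) := by
  have hu' : (2 : R[X]) * C u = 1 := by rw [← C_1, ← hu, C_mul, C_ofNat]
  rw [rIdealOf, Ideal.span_le]
  rintro f (rfl | rfl | rfl)
  all_goals
    simp only [SetLike.mem_coe, Ideal.mem_comap, Ideal.mem_span_singleton, elimE₂, twiceE₂,
      cubic, map_sub, map_add, map_mul, map_pow, map_ofNat, MvPolynomial.aeval_X,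
      MvPolynomial.aeval_C, Matrix.cons_val_zero, Matrix.cons_val_one, algebraMap_eq]
  · exact ⟨0, by linear_combination (-(X ^ 2 - (C a + C b) * X + 2 * (C a * C b))) * hu'⟩
  · refine ⟨C u ^ 2 * (X + (C a + C b)), ?_⟩
    linear_combination ((C a + C b) ^ 2 * C u * (X ^ 2 - (C a + C b) * X + 2 * (C a * C b))
      - C a * C b * (C a + C b) * X * (2 * C u + 1) + (C a * C b) ^ 2 * (2 * C u + 1)) * hu'
  · exact ⟨C u, by linear_combination (-(C a * C b * X)) * hu'⟩

theorem mk_aeval_X_zero_twiceE₂ :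
    Ideal.Quotient.mk (rIdealOf a b) (aeval (MvPolynomial.X 0) (twiceE₂ a b))
      = 2 * Ideal.Quotient.mk (rIdealOf a b) (MvPolynomial.X 1) := by
  rw [← map_ofNat (Ideal.Quotient.mk (rIdealOf a b)) 2, ← map_mul, Ideal.Quotient.eq, rIdealOf]
  refine Ideal.subset_span (Or.inl ?_)
  simp only [twiceE₂, map_sub, map_add, map_mul, map_pow, aeval_X, aeval_C,
    MvPolynomial.algebraMap_eq]
  ring

theorem exists_algEquiv_quotient_cubic (h2 : IsUnit (2 : R)) :
    ∃ ψ : (MvPolynomial (Fin 2) R ⧸ rIdealOf a b) ≃ₐ[R] (R[X] ⧸ Ideal.span {cubic a b}),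
      ψ (Ideal.Quotient.mk _ (MvPolynomial.X 0)) = Ideal.Quotient.mk _ X ∧
      2 * ψ (Ideal.Quotient.mk _ (MvPolynomial.X 1)) = Ideal.Quotient.mk _ (twiceE₂ a b) := by
  obtain ⟨u, hu⟩ := h2.exists_right_inv
  let φ := Ideal.quotientMapₐ _ (elimE₂ a b u) (rIdealOf_le_comap_elimE₂ a b hu)
  let ψ := Ideal.quotientMapₐ (rIdealOf a b) (aeval (R := R) (MvPolynomial.X (0 : Fin 2)))
    (I := Ideal.span {cubic a b})
    (Ideal.span_le.2 (Set.singleton_subset_iff.2 (aeval_X_zero_cubic_mem_rIdealOf a b)))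
  have hφ₂ : 2 * φ (Ideal.Quotient.mk _ (MvPolynomial.X 1))
      = Ideal.Quotient.mk _ (twiceE₂ a b) := by
    have hu' : (2 : R[X]) * C u = 1 := by rw [← C_1, ← hu, C_mul, C_ofNat]
    simp [φ, elimE₂, ← mul_assoc, ← map_ofNat (Ideal.Quotient.mk _), ← map_mul, hu']
  have hφψ : φ.comp ψ = AlgHom.id R _ := by
    refine Ideal.Quotient.algHom_ext _ (Polynomial.algHom_ext ?_)
    simp [φ, ψ, elimE₂]
  have hψφ : ψ.comp φ = AlgHom.id R _ := by
    refine Ideal.Quotient.algHom_ext _ (MvPolynomial.algHom_ext fun i ↦ ?_)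
    fin_cases i
    · simp [φ, ψ, elimE₂]
    · have hu' : algebraMap R (MvPolynomial (Fin 2) R ⧸ rIdealOf a b) u * 2 = 1 := by
        rw [← map_ofNat (algebraMap R (MvPolynomial (Fin 2) R ⧸ rIdealOf a b)) 2, ← map_mul,
          mul_comm, hu, map_one]
      simp [φ, ψ, elimE₂, mk_aeval_X_zero_twiceE₂, ← mul_assoc, hu']
  exact ⟨AlgEquiv.ofAlgHom φ ψ hφψ hψφ, by simp [φ, elimE₂], hφ₂⟩

end Generic

/-- The `A`-algebra
`A[e₁, e₂]/(e₁² − (t₁+t₂)e₁ − 2e₂ + 2t₁t₂, e₂² − (t₁+t₂)²e₂ + t₁t₂(t₁+t₂)e₁ − t₁²t₂²,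
e₁e₂ − 2(t₁+t₂)e₂ + t₁t₂e₁)` is isomorphic as an `A`-algebra to
`A[e₁]/((e₁ − 2t₁)(e₁ − 2t₂)(e₁ − (t₁+t₂)))`, via the map fixing `e₁` and sending `e₂`
to `(e₁² − (t₁+t₂)e₁ + 2t₁t₂)/2` (the latter condition is expressed by multiplying
through by `2`, which is invertible since `char k ≠ 2`). -/
theorem statement9 (k : Type) [Field k] (hk : (2 : k) ≠ 0) :
    ∃ ψ : Q₁ k ≃ₐ[A k] Q₂ k,
      ψ (e k 0) = e₁' k ∧
      2 * ψ (e k 1) =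
        (e₁' k) ^ 2 - @algebraMap (A k) (Q₂ k) _ (Ideal.Quotient.semiring (qIdeal k)) _ (t k 0 + t k 1) * e₁' k
          + @algebraMap (A k) (Q₂ k) _ (Ideal.Quotient.semiring (qIdeal k)) _ (2 * (t k 0 * t k 1)) := by
  have h2 : IsUnit (2 : A k) := by
    simpa only [map_ofNat] using hk.isUnit.map (algebraMap k (A k))
  obtain ⟨ψ, hψ₁, hψ₂⟩ := exists_algEquiv_quotient_cubic (t k 0) (t k 1) h2
  refine ⟨ψ, hψ₁, hψ₂.trans ?_⟩
  simp only [twiceE₂, map_add, map_sub, map_mul, map_pow]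
  rfl

end Paper9
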